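/- arXiv:2203.17041 — 3 statements merged into one kernel-verified Lean document; each statement's English description precedes it below -/
import Mathlib

section
/- Let G = (V,E) be a finite simple graph with no isolated vertices satisfying (i) every vertex has distance at most two to a pendant vertex and (ii) no two non-pendant edges of type I are incident. Let E_0, E_1, E_2 denote the sets of pendant edges, non-pendant edges of type I, and non-pendant edges of type II, respectively. Define, for each nonempty S ⊆ E and each edge i ∈ S with endpoints u and v: x_{S,i} = 1 if i ∈ E_0; x_{S,i} = 1 if i ∈ E_1 and δ(u) ⊆ S or δ(v) ⊆ S; x_{S,i} = 1/|δ(u)| if i ∈ E_2 and δ(u) ⊆ S ∩ E_2; x_{S,i} = 1/|δ(v)| if i ∈ E_2 and δ(v) ⊆ S ∩ E_2; and x_{S,i} = 0 otherwise. Then this scheme is well-defined (for i ∈ E_2 the cases δ(u) ⊆ S ∩ E_2 and δ(v) ⊆ S ∩ E_2 never hold simultaneously) and satisfies monotonicity: x_{S,i} ≤ x_{T,i} for all nonempty S ⊆ T ⊆ E and all i ∈ S. -/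
open Finset

variable {V : Type*} [Fintype V] [DecidableEq V]

/-- `I` is an independent set of the graph `G`. -/
def Indep (G : SimpleGraph V) (I : Finset V) : Prop :=
  ∀ u ∈ I, ∀ v ∈ I, ¬ G.Adj u v

/-- The independence number of `G` restricted to the vertex set `U`,
i.e. `α(G[U])`: the maximum size of an independent set contained in `U`. -/
noncomputable def alphaOn (G : SimpleGraph V) (U : Set V) : ℕ :=
  sSup {n : ℕ | ∃ I : Finset V, ↑I ⊆ U ∧ Indep G I ∧ I.card = n}

/-- `δ(v)`: the set of edges of `G` incident to the vertex `v`. -/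
def incEdges (G : SimpleGraph V) (v : V) : Set (Sym2 V) :=
  {e | e ∈ G.edgeSet ∧ v ∈ e}

/-- `δ(v)` as a finset. -/
def incFinset (G : SimpleGraph V) [DecidableRel G.Adj] (v : V) : Finset (Sym2 V) :=
  G.edgeFinset.filter (fun e => v ∈ e)

/-- `V⟨S⟩`: the set of vertices of `G` all of whose incident edges lie in `S`. -/
def onlyInc (G : SimpleGraph V) (S : Set (Sym2 V)) : Set V :=
  {v | incEdges G v ⊆ S}

/-- The characteristic function of the independent set game on `G`:
`γ(S) = α(G[V⟨S⟩])`. -/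
noncomputable def gammaIS (G : SimpleGraph V) (S : Finset (Sym2 V)) : ℕ :=
  alphaOn G (onlyInc G ↑S)

/-- `x` is a population monotonic allocation scheme (PMAS) of the independent set
game on `G`: it is nonnegative, efficient, and monotone.  Coalitions are the
nonempty subsets of the player set `N = E(G)` (`G.edgeFinset`). -/
def IsPMAS (G : SimpleGraph V) [DecidableRel G.Adj]
    (x : Finset (Sym2 V) → Sym2 V → ℝ) : Prop :=
  (∀ S ⊆ G.edgeFinset, ∀ i ∈ S, 0 ≤ x S i) ∧
  (∀ S ⊆ G.edgeFinset, S.Nonempty → ∑ i ∈ S, x S i = (gammaIS G S : ℝ)) ∧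
  (∀ S T : Finset (Sym2 V), S ⊆ T → T ⊆ G.edgeFinset → S.Nonempty →
    ∀ i ∈ S, x S i ≤ x T i)

/-- An edge of `G` is pendant if one of its endpoints has degree one. -/
def PendantEdge (G : SimpleGraph V) [DecidableRel G.Adj] (e : Sym2 V) : Prop :=
  e ∈ G.edgeSet ∧ ∃ v ∈ e, G.degree v = 1

/-- A non-pendant edge of type I: not incident to any pendant edge. -/
def TypeI (G : SimpleGraph V) [DecidableRel G.Adj] (e : Sym2 V) : Prop :=
  e ∈ G.edgeSet ∧ ¬ PendantEdge G e ∧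
    ∀ f : Sym2 V, PendantEdge G f → ¬ ∃ w : V, w ∈ e ∧ w ∈ f

/-- A non-pendant edge of type II: incident to some pendant edge. -/
def TypeII (G : SimpleGraph V) [DecidableRel G.Adj] (e : Sym2 V) : Prop :=
  e ∈ G.edgeSet ∧ ¬ PendantEdge G e ∧
    ∃ f : Sym2 V, PendantEdge G f ∧ ∃ w : V, w ∈ e ∧ w ∈ f

/-- The vertex `v` has distance at most two to some pendant vertex of `G`. -/
def NearPendant (G : SimpleGraph V) [DecidableRel G.Adj] (v : V) : Prop :=
  ∃ p : V, G.degree p = 1 ∧ ∃ w : G.Walk v p, w.length ≤ 2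


/-- `x` satisfies the defining clauses of the allocation scheme (2) of the paper:
for a nonempty coalition `S ⊆ E` and an edge `i = uv ∈ S`,
`x_{S,i} = 1` if `i ∈ E₀` (pendant edges);
`x_{S,i} = 1` if `i ∈ E₁` (type I) and `δ(u) ⊆ S` or `δ(v) ⊆ S`;
`x_{S,i} = 1/|δ(u)|` if `i ∈ E₂` (type II) and `δ(u) ⊆ S ∩ E₂`;
`x_{S,i} = 1/|δ(v)|` if `i ∈ E₂` and `δ(v) ⊆ S ∩ E₂`;
and `x_{S,i} = 0` otherwise.  (Here `δ(w) ⊆ S ∩ E₂` is expressed as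
`δ(w) ⊆ S` together with every edge of `δ(w)` being of type II.) -/
def SchemeSpec (G : SimpleGraph V) [Fintype V] [DecidableEq V] [DecidableRel G.Adj]
    (x : Finset (Sym2 V) → Sym2 V → ℝ) : Prop :=
  ∀ S : Finset (Sym2 V), S ⊆ G.edgeFinset → ∀ u v : V, s(u, v) ∈ S →
    (PendantEdge G s(u, v) → x S s(u, v) = 1) ∧
    (TypeI G s(u, v) →
      ((incFinset G u ⊆ S ∨ incFinset G v ⊆ S) → x S s(u, v) = 1) ∧
      (¬ (incFinset G u ⊆ S ∨ incFinset G v ⊆ S) → x S s(u, v) = 0)) ∧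
    (TypeII G s(u, v) →
      ((incFinset G u ⊆ S ∧ ∀ e ∈ incFinset G u, TypeII G e) →
        x S s(u, v) = 1 / ((incFinset G u).card : ℝ)) ∧
      ((incFinset G v ⊆ S ∧ ∀ e ∈ incFinset G v, TypeII G e) →
        x S s(u, v) = 1 / ((incFinset G v).card : ℝ)) ∧
      (¬ (incFinset G u ⊆ S ∧ ∀ e ∈ incFinset G u, TypeII G e) →
       ¬ (incFinset G v ⊆ S ∧ ∀ e ∈ incFinset G v, TypeII G e) →
        x S s(u, v) = 0))

/-- Under conditions (i) and (ii) of the main theorem, the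
scheme (2) is well-defined (for a type II edge `uv` the cases
`δ(u) ⊆ S ∩ E₂` and `δ(v) ⊆ S ∩ E₂` never hold simultaneously) and it is
monotone: `x_{S,i} ≤ x_{T,i}` for all nonempty `S ⊆ T ⊆ E` and `i ∈ S`. -/
theorem stmt_16 (G : SimpleGraph V) [DecidableRel G.Adj]
    (hiso : ∀ w : V, G.degree w ≠ 0)
    (h1 : ∀ w : V, NearPendant G w)
    (h2 : ∀ e f : Sym2 V, TypeI G e → TypeI G f → e ≠ f →
      ¬ ∃ w : V, w ∈ e ∧ w ∈ f) :
    (∀ S : Finset (Sym2 V), S ⊆ G.edgeFinset → ∀ u v : V, s(u, v) ∈ S →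
      TypeII G s(u, v) →
        ¬ ((incFinset G u ⊆ S ∧ ∀ e ∈ incFinset G u, TypeII G e) ∧
           (incFinset G v ⊆ S ∧ ∀ e ∈ incFinset G v, TypeII G e))) ∧
    (∀ x : Finset (Sym2 V) → Sym2 V → ℝ, SchemeSpec G x →
      ∀ S T : Finset (Sym2 V), S ⊆ T → T ⊆ G.edgeFinset → S.Nonempty →
        ∀ i ∈ S, x S i ≤ x T i) := by
  classical
  constructor
  · rintro S hS u v hmem hII ⟨⟨hu1, hu2⟩, ⟨hv1, hv2⟩⟩
    obtain ⟨he, hnp, f, hf, w, hwuv, hwf⟩ := hII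
    rcases Sym2.mem_iff.mp hwuv with rfl | rfl
    · exact (hu2 f (by simp [incFinset, SimpleGraph.mem_edgeFinset, hf.1, hwf])).2.1 hf
    · exact (hv2 f (by simp [incFinset, SimpleGraph.mem_edgeFinset, hf.1, hwf])).2.1 hf
  · intro x hx S T hST hTE hSne i hiS
    obtain ⟨⟨u, v⟩, rfl⟩ := i.exists_rep
    have hiT := hST hiS
    have hspecS := hx S (hST.trans hTE) u v hiS
    have hspecT := hx T hTE u v hiT
    have hedge : s(u, v) ∈ G.edgeSet := by
      have := hTE hiT; rwa [SimpleGraph.mem_edgeFinset] at this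
    by_cases hP : PendantEdge G s(u, v)
    · rw [hspecS.1 hP, hspecT.1 hP]
    · by_cases hInc : ∃ f : Sym2 V, PendantEdge G f ∧ ∃ w : V, w ∈ s(u, v) ∧ w ∈ f
      · have hII : TypeII G s(u, v) := ⟨hedge, hP, hInc⟩
        obtain ⟨hSu, hSv, hS0⟩ := hspecS.2.2 hII
        obtain ⟨hTu, hTv, hT0⟩ := hspecT.2.2 hII
        by_cases hcu : incFinset G u ⊆ S ∧ ∀ e ∈ incFinset G u, TypeII G e
        · rw [hSu hcu, hTu ⟨hcu.1.trans hST, hcu.2⟩]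
        · by_cases hcv : incFinset G v ⊆ S ∧ ∀ e ∈ incFinset G v, TypeII G e
          · rw [hSv hcv, hTv ⟨hcv.1.trans hST, hcv.2⟩]
          · rw [hS0 hcu hcv]
            by_cases htu : incFinset G u ⊆ T ∧ ∀ e ∈ incFinset G u, TypeII G e
            · rw [hTu htu]; positivity
            · by_cases htv : incFinset G v ⊆ T ∧ ∀ e ∈ incFinset G v, TypeII G e
              · rw [hTv htv]; positivity
              · rw [hT0 htu htv]
      · have hI : TypeI G s(u, v) := ⟨hedge, hP, fun f hf hex => hInc ⟨f, hf, hex⟩⟩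
        obtain ⟨hS1, hS0⟩ := hspecS.2.1 hI
        obtain ⟨hT1, hT0⟩ := hspecT.2.1 hI
        by_cases hc : incFinset G u ⊆ S ∨ incFinset G v ⊆ S
        · rw [hS1 hc, hT1 (hc.imp (·.trans hST) (·.trans hST))]
        · rw [hS0 hc]
          by_cases hct : incFinset G u ⊆ T ∨ incFinset G v ⊆ T
          · rw [hT1 hct]; norm_num
          · rw [hT0 hct]
end

section
/- Let G = (V,E) be a finite simple graph with no isolated vertices satisfying (i) every vertex has distance at most two to a pendant vertex and (ii) no two non-pendant edges of type I are incident. Let E_0, E_1, E_2 denote the sets of pendant edges, non-pendant edges of type I, and non-pendant edges of type II, respectively. Define, for each nonempty S ⊆ E and each edge i ∈ S with endpoints u and v: x_{S,i} = 1 if i ∈ E_0; x_{S,i} = 1 if i ∈ E_1 and δ(u) ⊆ S or δ(v) ⊆ S; x_{S,i} = 1/|δ(u)| if i ∈ E_2 and δ(u) ⊆ S ∩ E_2; x_{S,i} = 1/|δ(v)| if i ∈ E_2 and δ(v) ⊆ S ∩ E_2; and x_{S,i} = 0 otherwise. Then this scheme satisfies efficiency for the independent set game Γ_G: for every nonempty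 S ⊆ E, ∑_{i ∈ S} x_{S,i} = γ(S) = α(G[V⟨S⟩]). -/
open Finset

variable {V : Type*} [Fintype V] [DecidableEq V]

section Aux
variable (G : SimpleGraph V) [DecidableRel G.Adj]

lemma mem_incFinset {v : V} {e : Sym2 V} :
    e ∈ incFinset G v ↔ e ∈ G.edgeSet ∧ v ∈ e := by
  simp [incFinset, SimpleGraph.mem_edgeFinset]

lemma incEdges_coe (v : V) : incEdges G v = ↑(incFinset G v) := by
  ext e; simp [incEdges, mem_incFinset]

lemma card_incFinset (v : V) : (incFinset G v).card = G.degree v := by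
  have : incFinset G v = G.incidenceFinset v := by
    ext e
    simp [mem_incFinset, SimpleGraph.mem_incidenceFinset, SimpleGraph.incidenceSet]
  rw [this, SimpleGraph.card_incidenceFinset_eq_degree]

lemma trichotomy {e : Sym2 V} (he : e ∈ G.edgeSet) :
    PendantEdge G e ∨ TypeI G e ∨ TypeII G e := by
  by_cases hp : PendantEdge G e
  · exact Or.inl hp
  by_cases h : ∃ f : Sym2 V, PendantEdge G f ∧ ∃ w : V, w ∈ e ∧ w ∈ f
  · exact Or.inr (Or.inr ⟨he, hp, h⟩)
  · exact Or.inr (Or.inl ⟨he, hp, fun f hf hw => h ⟨f, hf, hw⟩⟩)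

lemma not_typeI_of_typeII {e : Sym2 V} (h : TypeII G e) : ¬ TypeI G e := by
  rintro ⟨_, _, hI⟩
  obtain ⟨_, _, f, hf, hw⟩ := h
  exact hI f hf hw

lemma unique_edge_deg_one {v : V} (hd : G.degree v = 1) {e e' : Sym2 V}
    (he : e ∈ incFinset G v) (he' : e' ∈ incFinset G v) : e = e' := by
  have h1 : (incFinset G v).card ≤ 1 := by rw [card_incFinset, hd]
  exact Finset.card_le_one.mp h1 e he e' he'

lemma adj_of_mem {e : Sym2 V} (he : e ∈ G.edgeSet) {u v : V}
    (hu : u ∈ e) (hv : v ∈ e) (hne : u ≠ v) : G.Adj u v := by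
  induction e with
  | h a b =>
    rw [Sym2.mem_iff] at hu hv
    rcases hu with rfl | rfl <;> rcases hv with rfl | rfl
    · exact absurd rfl hne
    · exact G.mem_edgeSet.mp he
    · exact (G.mem_edgeSet.mp he).symm
    · exact absurd rfl hne

lemma mem_onlyInc {S : Finset (Sym2 V)} {v : V} :
    v ∈ onlyInc G ↑S ↔ incFinset G v ⊆ S := by
  constructor
  · intro h e he
    exact h ((incEdges_coe G v).symm ▸ he : e ∈ incEdges G v)
  · intro h e he
    rw [incEdges_coe] at he
    exact h he

/-- Lemma A: a type II edge cannot have all incident edges (at all its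
vertices) of type II. -/
lemma lemA {e : Sym2 V} (h : TypeII G e)
    (hall : ∀ z ∈ e, ∀ f ∈ incFinset G z, TypeII G f) : False := by
  obtain ⟨he, hnp, f, hf, z, hze, hzf⟩ := h
  have : f ∈ incFinset G z := (mem_incFinset G).mpr ⟨hf.1, hzf⟩
  exact (hall z hze f this).2.1 hf
section Aux2
open scoped Classical
variable {G : SimpleGraph V} [DecidableRel G.Adj] {x : Finset (Sym2 V) → Sym2 V → ℝ}
  {S : Finset (Sym2 V)}

/-- The "qualifying" predicate for type II contributions. -/
def Qual (G : SimpleGraph V) [DecidableRel G.Adj] (S : Finset (Sym2 V)) (q : V) : Prop :=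
  incFinset G q ⊆ S ∧ ∀ f ∈ incFinset G q, TypeII G f

lemma sym2_eq_of_two_mem {e : Sym2 V} {q q' : V} (hq : q ∈ e) (hq' : q' ∈ e)
    (hne : q ≠ q') : e = s(q, q') := by
  induction e with
  | h a b =>
    rw [Sym2.mem_iff] at hq hq'
    rcases hq with rfl | rfl <;> rcases hq' with rfl | rfl
    · exact absurd rfl hne
    · rfl
    · exact Sym2.eq_swap
    · exact absurd rfl hne

lemma spec_pendant (hx : SchemeSpec G x) (hS : S ⊆ G.edgeFinset) {e : Sym2 V}
    (he : e ∈ S) (hp : PendantEdge G e) : x S e = 1 := by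
  induction e with
  | h u v => exact (hx S hS u v he).1 hp

lemma spec_typeI_full (hx : SchemeSpec G x) (hS : S ⊆ G.edgeFinset) {e : Sym2 V}
    (he : e ∈ S) (h1 : TypeI G e) (hf : ∃ w ∈ e, incFinset G w ⊆ S) : x S e = 1 := by
  induction e with
  | h u v =>
    obtain ⟨w, hw, hwS⟩ := hf
    rw [Sym2.mem_iff] at hw
    refine ((hx S hS u v he).2.1 h1).1 ?_
    rcases hw with rfl | rfl
    · exact Or.inl hwS
    · exact Or.inr hwS

lemma spec_typeI_notfull (hx : SchemeSpec G x) (hS : S ⊆ G.edgeFinset) {e : Sym2 V}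
    (he : e ∈ S) (h1 : TypeI G e) (hf : ¬ ∃ w ∈ e, incFinset G w ⊆ S) : x S e = 0 := by
  induction e with
  | h u v =>
    refine ((hx S hS u v he).2.1 h1).2 ?_
    rintro (h | h)
    · exact hf ⟨u, Sym2.mem_mk_left u v, h⟩
    · exact hf ⟨v, Sym2.mem_mk_right u v, h⟩

lemma spec_typeII_qual (hx : SchemeSpec G x) (hS : S ⊆ G.edgeFinset) {e : Sym2 V}
    (he : e ∈ S) (h2 : TypeII G e) {q : V} (hq : q ∈ e) (hQ : Qual G S q) :
    x S e = 1 / ((incFinset G q).card : ℝ) := by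
  induction e with
  | h u v =>
    rw [Sym2.mem_iff] at hq
    rcases hq with rfl | rfl
    · exact ((hx S hS _ _ he).2.2 h2).1 hQ
    · exact ((hx S hS _ _ he).2.2 h2).2.1 hQ

lemma spec_typeII_notqual (hx : SchemeSpec G x) (hS : S ⊆ G.edgeFinset) {e : Sym2 V}
    (he : e ∈ S) (h2 : TypeII G e) (hq : ¬ ∃ w ∈ e, Qual G S w) : x S e = 0 := by
  induction e with
  | h u v =>
    refine ((hx S hS u v he).2.2 h2).2.2 ?_ ?_
    · exact fun h => hq ⟨u, Sym2.mem_mk_left u v, h⟩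
    · exact fun h => hq ⟨v, Sym2.mem_mk_right u v, h⟩

/-- Step 1: the total payoff of the scheme on a coalition `S`. -/
lemma key1 (hiso : ∀ w : V, G.degree w ≠ 0) (hx : SchemeSpec G x)
    (hS : S ⊆ G.edgeFinset) :
    ∑ i ∈ S, x S i =
      ((S.filter (fun e => PendantEdge G e)).card : ℝ) +
      ((S.filter (fun e => TypeI G e ∧ ∃ w ∈ e, incFinset G w ⊆ S)).card : ℝ) +
      ((Finset.univ.filter (fun q : V => Qual G S q)).card : ℝ) := by
  classical
  have hedge : ∀ e ∈ S, e ∈ G.edgeSet := fun e he =>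
    SimpleGraph.mem_edgeFinset.mp (hS he)
  rw [← Finset.sum_filter_add_sum_filter_not S (fun e => PendantEdge G e)]
  have h0 : ∑ i ∈ S.filter (fun e => PendantEdge G e), x S i
      = ((S.filter (fun e => PendantEdge G e)).card : ℝ) := by
    rw [Finset.sum_eq_card_nsmul (fun e he => by
      rw [Finset.mem_filter] at he
      exact spec_pendant hx hS he.1 he.2 : ∀ e ∈ _, x S e = (1:ℝ))]
    simp
  rw [h0]
  -- split the non-pendant edges into type I and type II
  set Snp := S.filter (fun e => ¬ PendantEdge G e) with hSnp
  rw [← Finset.sum_filter_add_sum_filter_not Snp (fun e => TypeI G e)]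
  have hI : Snp.filter (fun e => TypeI G e)
      = S.filter (fun e => TypeI G e) := by
    rw [hSnp, Finset.filter_filter]
    exact Finset.filter_congr (fun e he => by
      constructor
      · exact fun h => h.2
      · exact fun h => ⟨h.2.1, h⟩)
  have hII : Snp.filter (fun e => ¬ TypeI G e)
      = S.filter (fun e => TypeII G e) := by
    rw [hSnp, Finset.filter_filter]
    refine Finset.filter_congr (fun e he => ?_)
    constructor
    · rintro ⟨hnp, hnI⟩
      rcases trichotomy G (hedge e he) with h | h | h
      · exact absurd h hnp
      · exact absurd h hnI
      · exact h
    · exact fun h => ⟨h.2.1, not_typeI_of_typeII G h⟩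
  rw [hI, hII]
  -- type I part
  rw [← Finset.sum_filter_add_sum_filter_not (S.filter (fun e => TypeI G e))
    (fun e => ∃ w ∈ e, incFinset G w ⊆ S)]
  have hIfull : (S.filter (fun e => TypeI G e)).filter (fun e => ∃ w ∈ e, incFinset G w ⊆ S)
      = S.filter (fun e => TypeI G e ∧ ∃ w ∈ e, incFinset G w ⊆ S) := by
    rw [Finset.filter_filter]
  have h1 : ∑ i ∈ (S.filter (fun e => TypeI G e)).filter
        (fun e => ∃ w ∈ e, incFinset G w ⊆ S), x S i
      = ((S.filter (fun e => TypeI G e ∧ ∃ w ∈ e, incFinset G w ⊆ S)).card : ℝ) := by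
    rw [hIfull, Finset.sum_eq_card_nsmul (fun e he => by
      rw [Finset.mem_filter] at he
      exact spec_typeI_full hx hS he.1 he.2.1 he.2.2 : ∀ e ∈ _, x S e = (1:ℝ))]
    simp
  have h1' : ∑ i ∈ (S.filter (fun e => TypeI G e)).filter
        (fun e => ¬ ∃ w ∈ e, incFinset G w ⊆ S), x S i = 0 := by
    refine Finset.sum_eq_zero (fun e he => ?_)
    rw [Finset.mem_filter, Finset.mem_filter] at he
    exact spec_typeI_notfull hx hS he.1.1 he.1.2 he.2
  rw [h1, h1']
  -- type II part
  rw [← Finset.sum_filter_add_sum_filter_not (S.filter (fun e => TypeII G e))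
    (fun e => ∃ w ∈ e, Qual G S w)]
  have h2' : ∑ i ∈ (S.filter (fun e => TypeII G e)).filter
        (fun e => ¬ ∃ w ∈ e, Qual G S w), x S i = 0 := by
    refine Finset.sum_eq_zero (fun e he => ?_)
    rw [Finset.mem_filter, Finset.mem_filter] at he
    exact spec_typeII_notqual hx hS he.1.1 he.1.2 he.2
  have hbi : (S.filter (fun e => TypeII G e)).filter (fun e => ∃ w ∈ e, Qual G S w)
      = (Finset.univ.filter (fun q : V => Qual G S q)).biUnion (fun q => incFinset G q) := by
    ext e
    simp only [Finset.mem_filter, Finset.mem_biUnion, Finset.mem_univ, true_and]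
    constructor
    · rintro ⟨⟨heS, heII⟩, w, hwe, hw⟩
      exact ⟨w, hw, (mem_incFinset G).mpr ⟨hedge e heS, hwe⟩⟩
    · rintro ⟨q, hq, hqe⟩
      obtain ⟨heE, hqmem⟩ := (mem_incFinset G).mp hqe
      exact ⟨⟨hq.1 hqe, hq.2 e hqe⟩, q, hqmem, hq⟩
  have hdisj : ∀ q ∈ Finset.univ.filter (fun q : V => Qual G S q),
      ∀ q' ∈ Finset.univ.filter (fun q : V => Qual G S q), q ≠ q' →
      Disjoint (incFinset G q) (incFinset G q') := by
    intro q hq q' hq' hne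
    rw [Finset.mem_filter] at hq hq'
    rw [Finset.disjoint_left]
    intro e he he'
    have hqe := (mem_incFinset G).mp he
    have hq'e := (mem_incFinset G).mp he'
    have heII : TypeII G e := hq.2.2 e he
    refine lemA G heII (fun z hz f hf => ?_)
    have : e = s(q, q') := sym2_eq_of_two_mem hqe.2 hq'e.2 hne
    rw [this, Sym2.mem_iff] at hz
    rcases hz with rfl | rfl
    · exact hq.2.2 f hf
    · exact hq'.2.2 f hf
  have h2 : ∑ i ∈ (S.filter (fun e => TypeII G e)).filter
        (fun e => ∃ w ∈ e, Qual G S w), x S i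
      = ((Finset.univ.filter (fun q : V => Qual G S q)).card : ℝ) := by
    rw [hbi, Finset.sum_biUnion hdisj]
    rw [Finset.sum_congr rfl (fun q hq => ?_), Finset.sum_const, nsmul_eq_mul, mul_one]
    rw [Finset.mem_filter] at hq
    have hsum : ∀ e ∈ incFinset G q, x S e = 1 / ((incFinset G q).card : ℝ) := by
      intro e he
      have hm := (mem_incFinset G).mp he
      exact spec_typeII_qual hx hS (hq.2.1 he) (hq.2.2 e he) hm.2 hq.2
    rw [Finset.sum_eq_card_nsmul hsum, nsmul_eq_mul]
    have hcard : ((incFinset G q).card : ℝ) ≠ 0 := by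
      rw [card_incFinset]
      exact_mod_cast hiso q
    field_simp
  rw [h2, h2']
  ring
end Aux2
section Aux3
open scoped Classical
variable {G : SimpleGraph V} [DecidableRel G.Adj] {S : Finset (Sym2 V)}

/-- Step 2: the value of `γ(S)`. -/
lemma key2 (hiso : ∀ w : V, G.degree w ≠ 0)
    (h2 : ∀ e f : Sym2 V, TypeI G e → TypeI G f → e ≠ f → ¬ ∃ w : V, w ∈ e ∧ w ∈ f)
    (hS : S ⊆ G.edgeFinset) (hSne : S.Nonempty) :
    gammaIS G S =
      (S.filter (fun e => PendantEdge G e)).card +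
      (S.filter (fun e => TypeI G e ∧ ∃ w ∈ e, incFinset G w ⊆ S)).card +
      (Finset.univ.filter (fun q : V => Qual G S q)).card := by
  classical
  set pendS := S.filter (fun e => PendantEdge G e) with hpendS
  set fullI := S.filter (fun e => TypeI G e ∧ ∃ w ∈ e, incFinset G w ⊆ S) with hfullI
  set Q := Finset.univ.filter (fun q : V => Qual G S q) with hQdef
  set n := pendS.card + fullI.card + Q.card with hn
  have hedge : ∀ e ∈ S, e ∈ G.edgeSet := fun e he =>
    SimpleGraph.mem_edgeFinset.mp (hS he)
  have hpsub : pendS ⊆ S := by rw [hpendS]; exact Finset.filter_subset _ _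
  have hQm : ∀ a ∈ Q, incFinset G a ⊆ S ∧ ∀ f ∈ incFinset G a, TypeII G f := by
    intro a ha; rw [hQdef, Finset.mem_filter] at ha; exact ha.2
  -- upper bound
  have hub : ∀ m ∈ {m : ℕ | ∃ I : Finset V, ↑I ⊆ onlyInc G ↑S ∧ Indep G I ∧ I.card = m},
      m ≤ n := by
    rintro m ⟨J, hJsub, hJind, rfl⟩
    set φ : V → Sym2 V ⊕ V := fun w =>
      if h : ∃ e ∈ incFinset G w, TypeI G e then Sum.inl h.choose
      else if h0 : ∃ e ∈ incFinset G w, PendantEdge G e then Sum.inl h0.choose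
      else Sum.inr w with hφdef
    set T : Finset (Sym2 V ⊕ V) := (pendS ∪ fullI).disjSum Q with hT
    have hφ : ∀ w, incFinset G w ⊆ S → φ w ∈ T ∧
        (∀ e, φ w = Sum.inl e → e ∈ incFinset G w) ∧
        (∀ v, φ w = Sum.inr v → v = w) := by
      intro w hw
      by_cases h : ∃ e ∈ incFinset G w, TypeI G e
      · have hec := h.choose_spec
        have hφw : φ w = Sum.inl h.choose := by simp only [hφdef]; rw [dif_pos h]
        refine ⟨?_, ?_, ?_⟩
        · rw [hφw, hT, Finset.inl_mem_disjSum]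
          refine Finset.mem_union_right _ ?_
          rw [hfullI, Finset.mem_filter]
          exact ⟨hw hec.1, hec.2, w, ((mem_incFinset G).mp hec.1).2, hw⟩
        · intro e he; rw [hφw] at he; injection he with he; rw [← he]; exact hec.1
        · intro v hv; rw [hφw] at hv; exact absurd hv (by simp)
      · by_cases h0 : ∃ e ∈ incFinset G w, PendantEdge G e
        · have hec := h0.choose_spec
          have hφw : φ w = Sum.inl h0.choose := by
            simp only [hφdef]; rw [dif_neg h, dif_pos h0]
          refine ⟨?_, ?_, ?_⟩
          · rw [hφw, hT, Finset.inl_mem_disjSum]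
            refine Finset.mem_union_left _ ?_
            rw [hpendS, Finset.mem_filter]
            exact ⟨hw hec.1, hec.2⟩
          · intro e he; rw [hφw] at he; injection he with he; rw [← he]; exact hec.1
          · intro v hv; rw [hφw] at hv; exact absurd hv (by simp)
        · have hφw : φ w = Sum.inr w := by
            simp only [hφdef]; rw [dif_neg h, dif_neg h0]
          refine ⟨?_, ?_, ?_⟩
          · rw [hφw, hT, Finset.inr_mem_disjSum, hQdef, Finset.mem_filter]
            refine ⟨Finset.mem_univ w, hw, fun f hf => ?_⟩
            rcases trichotomy G ((mem_incFinset G).mp hf).1 with hp | hI | hII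
            · exact absurd ⟨f, hf, hp⟩ h0
            · exact absurd ⟨f, hf, hI⟩ h
            · exact hII
          · intro e he; rw [hφw] at he; exact absurd he (by simp)
          · intro v hv; rw [hφw] at hv; exact (Sum.inr.inj hv).symm
    have hmaps : ∀ w ∈ J, φ w ∈ T := fun w hw =>
      (hφ w ((mem_onlyInc G).mp (hJsub (Finset.mem_coe.mpr hw)))).1
    have hinj : Set.InjOn φ ↑J := by
      intro a ha b hb heq
      have hA := hφ a ((mem_onlyInc G).mp (hJsub ha))
      have hB := hφ b ((mem_onlyInc G).mp (hJsub hb))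
      by_contra hne
      cases hpa : φ a with
      | inl e =>
        have hae := hA.2.1 e hpa
        have hbe := hB.2.1 e (by rw [← heq]; exact hpa)
        have he1 := (mem_incFinset G).mp hae
        have he2 := (mem_incFinset G).mp hbe
        exact hJind a (Finset.mem_coe.mp ha) b (Finset.mem_coe.mp hb)
          (adj_of_mem G he1.1 he1.2 he2.2 hne)
      | inr v =>
        have hva := hA.2.2 v hpa
        have hvb := hB.2.2 v (by rw [← heq]; exact hpa)
        exact hne (hva ▸ hvb ▸ rfl)
    have hd01 : Disjoint pendS fullI := by
      rw [Finset.disjoint_left]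
      intro e he hf
      rw [hpendS, Finset.mem_filter] at he
      rw [hfullI, Finset.mem_filter] at hf
      exact hf.2.1.2.1 he.2
    calc J.card ≤ T.card := Finset.card_le_card_of_injOn φ hmaps hinj
    _ = n := by
      rw [hT, Finset.card_disjSum, Finset.card_union_of_disjoint hd01, hn]
  -- lower bound : an explicit independent set of size n
  have hVne : Nonempty V := by
    obtain ⟨e0, _⟩ := hSne
    exact Sym2.ind (fun a _ => ⟨a⟩) e0
  obtain ⟨v0⟩ := hVne
  set f0 : Sym2 V → V := fun e =>
    if h : ∃ v ∈ e, G.degree v = 1 then h.choose else v0 with hf0def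
  set f1 : Sym2 V → V := fun e =>
    if h : ∃ w ∈ e, incFinset G w ⊆ S then h.choose else v0 with hf1def
  have hf0 : ∀ e ∈ pendS, f0 e ∈ e ∧ G.degree (f0 e) = 1 := by
    intro e he
    rw [hpendS, Finset.mem_filter] at he
    have h := he.2.2
    have hfe : f0 e = h.choose := by simp only [hf0def]; rw [dif_pos h]
    rw [hfe]; exact h.choose_spec
  have hf1 : ∀ e ∈ fullI, f1 e ∈ e ∧ incFinset G (f1 e) ⊆ S := by
    intro e he
    rw [hfullI, Finset.mem_filter] at he
    have h := he.2.2
    have hfe : f1 e = h.choose := by simp only [hf1def]; rw [dif_pos h]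
    rw [hfe]; exact h.choose_spec
  have hP : ∀ a ∈ pendS.image f0, G.degree a = 1 := by
    intro a ha
    obtain ⟨e, he, rfl⟩ := Finset.mem_image.mp ha
    exact (hf0 e he).2
  have hF : ∀ a ∈ fullI.image f1, ∃ e, e ∈ S ∧ TypeI G e ∧ a ∈ e := by
    intro a ha
    obtain ⟨e, he, rfl⟩ := Finset.mem_image.mp ha
    have he' := he
    rw [hfullI, Finset.mem_filter] at he'
    exact ⟨e, he'.1, he'.2.1, (hf1 e he).1⟩
  have adjPx : ∀ a b : V, G.degree a = 1 → G.Adj a b → PendantEdge G s(a, b) :=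
    fun a b hd hadj => ⟨G.mem_edgeSet.mpr hadj, a, Sym2.mem_mk_left a b, hd⟩
  have hPP : ∀ a ∈ pendS.image f0, ∀ b ∈ pendS.image f0, ¬ G.Adj a b := by
    intro a ha b hb hadj
    obtain ⟨e, he, rfl⟩ := Finset.mem_image.mp ha
    obtain ⟨e', he', rfl⟩ := Finset.mem_image.mp hb
    have h1 := hf0 e he
    have h1' := hf0 e' he'
    have hg : s(f0 e, f0 e') ∈ G.edgeSet := G.mem_edgeSet.mpr hadj
    have heq1 : s(f0 e, f0 e') = e :=
      unique_edge_deg_one G h1.2 ((mem_incFinset G).mpr ⟨hg, Sym2.mem_mk_left _ _⟩)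
        ((mem_incFinset G).mpr ⟨hedge e (hpsub he), h1.1⟩)
    have heq2 : s(f0 e, f0 e') = e' :=
      unique_edge_deg_one G h1'.2 ((mem_incFinset G).mpr ⟨hg, Sym2.mem_mk_right _ _⟩)
        ((mem_incFinset G).mpr ⟨hedge e' (hpsub he'), h1'.1⟩)
    have : f0 e = f0 e' := by rw [heq1.symm.trans heq2]
    exact hadj.ne this
  have hPF : ∀ a b : V, G.degree a = 1 → (∃ e, e ∈ S ∧ TypeI G e ∧ b ∈ e) →
      ¬ G.Adj a b := by
    rintro a b hd ⟨e, _, heI, hbe⟩ hadj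
    exact heI.2.2 s(a, b) (adjPx a b hd hadj) ⟨b, hbe, Sym2.mem_mk_right a b⟩
  have hPQ : ∀ a b : V, G.degree a = 1 → b ∈ Q → ¬ G.Adj a b := by
    intro a b hd hbQ hadj
    have hg : s(a, b) ∈ incFinset G b :=
      (mem_incFinset G).mpr ⟨G.mem_edgeSet.mpr hadj, Sym2.mem_mk_right a b⟩
    exact ((hQm b hbQ).2 _ hg).2.1 (adjPx a b hd hadj)
  have hFF : ∀ a ∈ fullI.image f1, ∀ b ∈ fullI.image f1, ¬ G.Adj a b := by
    intro a ha b hb hadj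
    obtain ⟨e, he, rfl⟩ := Finset.mem_image.mp ha
    obtain ⟨e', he', rfl⟩ := Finset.mem_image.mp hb
    have hee' : e ≠ e' := by
      intro hcontra
      exact hadj.ne (by rw [hcontra])
    have hIe : TypeI G e := by
      have := he; rw [hfullI, Finset.mem_filter] at this; exact this.2.1
    have hIe' : TypeI G e' := by
      have := he'; rw [hfullI, Finset.mem_filter] at this; exact this.2.1
    have hae : f1 e ∈ e := (hf1 e he).1
    have hbe' : f1 e' ∈ e' := (hf1 e' he').1
    have hg : s(f1 e, f1 e') ∈ G.edgeSet := G.mem_edgeSet.mpr hadj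
    rcases trichotomy G hg with hp | hI | hII
    · exact hIe.2.2 _ hp ⟨f1 e, hae, Sym2.mem_mk_left _ _⟩
    · by_cases hge : s(f1 e, f1 e') = e
      · refine h2 e e' hIe hIe' hee' ⟨f1 e', ?_, hbe'⟩
        rw [← hge]; exact Sym2.mem_mk_right _ _
      · exact h2 _ e hI hIe hge ⟨f1 e, Sym2.mem_mk_left _ _, hae⟩
    · obtain ⟨_, _, f, hf, w, hwg, hwf⟩ := hII
      rw [Sym2.mem_iff] at hwg
      rcases hwg with rfl | rfl
      · exact hIe.2.2 f hf ⟨f1 e, hae, hwf⟩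
      · exact hIe'.2.2 f hf ⟨f1 e', hbe', hwf⟩
  have hFQ : ∀ a b : V, (∃ e, e ∈ S ∧ TypeI G e ∧ a ∈ e) → b ∈ Q → ¬ G.Adj a b := by
    rintro a b ⟨e, heS, heI, hae⟩ hbQ hadj
    have hg : s(a, b) ∈ incFinset G b :=
      (mem_incFinset G).mpr ⟨G.mem_edgeSet.mpr hadj, Sym2.mem_mk_right a b⟩
    obtain ⟨_, _, f, hf, w, hwg, hwf⟩ := (hQm b hbQ).2 _ hg
    rw [Sym2.mem_iff] at hwg
    rcases hwg with rfl | rfl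
    · exact heI.2.2 f hf ⟨w, hae, hwf⟩
    · have : f ∈ incFinset G w := (mem_incFinset G).mpr ⟨hf.1, hwf⟩
      exact ((hQm w hbQ).2 f this).2.1 hf
  have hQQ : ∀ a b : V, a ∈ Q → b ∈ Q → ¬ G.Adj a b := by
    intro a b ha hb hadj
    have hg : s(a, b) ∈ incFinset G a :=
      (mem_incFinset G).mpr ⟨G.mem_edgeSet.mpr hadj, Sym2.mem_mk_left a b⟩
    refine lemA G ((hQm a ha).2 _ hg) (fun z hz f hf => ?_)
    rw [Sym2.mem_iff] at hz
    rcases hz with rfl | rfl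
    · exact (hQm z ha).2 f hf
    · exact (hQm z hb).2 f hf
  set I : Finset V := pendS.image f0 ∪ fullI.image f1 ∪ Q with hIdef
  have hIsub : ↑I ⊆ onlyInc G ↑S := by
    intro a ha
    rw [Finset.mem_coe, hIdef] at ha
    refine (mem_onlyInc G).mpr ?_
    rcases Finset.mem_union.mp ha with ha1 | haQ
    · rcases Finset.mem_union.mp ha1 with haP | haF
      · obtain ⟨e, he, rfl⟩ := Finset.mem_image.mp haP
        intro g hg
        have : g = e := unique_edge_deg_one G (hf0 e he).2 hg
          ((mem_incFinset G).mpr ⟨hedge e (hpsub he), (hf0 e he).1⟩)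
        rw [this]; exact hpsub he
      · obtain ⟨e, he, rfl⟩ := Finset.mem_image.mp haF
        exact (hf1 e he).2
    · exact (hQm a haQ).1
  have hIind : Indep G I := by
    intro a ha b hb hadj
    rw [hIdef] at ha hb
    rcases Finset.mem_union.mp ha with ha1 | haQ
    · rcases Finset.mem_union.mp ha1 with haP | haF
      · rcases Finset.mem_union.mp hb with hb1 | hbQ
        · rcases Finset.mem_union.mp hb1 with hbP | hbF
          · exact hPP a haP b hbP hadj
          · exact hPF a b (hP a haP) (hF b hbF) hadj
        · exact hPQ a b (hP a haP) hbQ hadj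
      · rcases Finset.mem_union.mp hb with hb1 | hbQ
        · rcases Finset.mem_union.mp hb1 with hbP | hbF
          · exact hPF b a (hP b hbP) (hF a haF) hadj.symm
          · exact hFF a haF b hbF hadj
        · exact hFQ a b (hF a haF) hbQ hadj
    · rcases Finset.mem_union.mp hb with hb1 | hbQ
      · rcases Finset.mem_union.mp hb1 with hbP | hbF
        · exact hPQ b a (hP b hbP) haQ hadj.symm
        · exact hFQ b a (hF b hbF) haQ hadj.symm
      · exact hQQ a b haQ hbQ hadj
  have d01 : Disjoint (pendS.image f0) (fullI.image f1) := by
    rw [Finset.disjoint_left]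
    intro a haP haF
    obtain ⟨e'', hS'', hI'', hae''⟩ := hF a haF
    exact hI''.2.1 ⟨hI''.1, a, hae'', hP a haP⟩
  have d0Q : Disjoint (pendS.image f0) Q := by
    rw [Finset.disjoint_left]
    intro a haP haQ
    obtain ⟨e, he, rfl⟩ := Finset.mem_image.mp haP
    have he' : e ∈ incFinset G (f0 e) :=
      (mem_incFinset G).mpr ⟨hedge _ (hpsub he), (hf0 e he).1⟩
    have hII := (hQm _ haQ).2 e he'
    have hep : PendantEdge G e := by
      have := he; rw [hpendS, Finset.mem_filter] at this; exact this.2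
    exact hII.2.1 hep
  have d1Q : Disjoint (fullI.image f1) Q := by
    rw [Finset.disjoint_left]
    intro a haF haQ
    obtain ⟨e, heS, hI', hae⟩ := hF a haF
    have : e ∈ incFinset G a := (mem_incFinset G).mpr ⟨hI'.1, hae⟩
    exact not_typeI_of_typeII G ((hQm a haQ).2 e this) hI'
  have i0 : (pendS.image f0).card = pendS.card := by
    refine Finset.card_image_of_injOn ?_
    intro e he e' he' heq
    have ha := hf0 e (Finset.mem_coe.mp he)
    have hb := hf0 e' (Finset.mem_coe.mp he')
    refine unique_edge_deg_one G hb.2 ?_ ?_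
    · exact (mem_incFinset G).mpr ⟨hedge e (hpsub (Finset.mem_coe.mp he)), heq ▸ ha.1⟩
    · exact (mem_incFinset G).mpr ⟨hedge e' (hpsub (Finset.mem_coe.mp he')), hb.1⟩
  have i1 : (fullI.image f1).card = fullI.card := by
    refine Finset.card_image_of_injOn ?_
    intro e he e' he' heq
    by_contra hne
    have hIe : TypeI G e := by
      have := Finset.mem_coe.mp he; rw [hfullI, Finset.mem_filter] at this
      exact this.2.1
    have hIe' : TypeI G e' := by
      have := Finset.mem_coe.mp he'; rw [hfullI, Finset.mem_filter] at this
      exact this.2.1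
    exact h2 e e' hIe hIe' hne
      ⟨f1 e, (hf1 e (Finset.mem_coe.mp he)).1, heq ▸ (hf1 e' (Finset.mem_coe.mp he')).1⟩
  have hIcard : I.card = n := by
    rw [hIdef, Finset.card_union_of_disjoint (Finset.disjoint_union_left.mpr ⟨d0Q, d1Q⟩),
      Finset.card_union_of_disjoint d01, i0, i1, hn]
  have hmem : n ∈ {m : ℕ | ∃ I : Finset V, ↑I ⊆ onlyInc G ↑S ∧ Indep G I ∧ I.card = m} :=
    ⟨I, hIsub, hIind, hIcard⟩
  show gammaIS G S = n
  simp only [gammaIS, alphaOn]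
  refine le_antisymm (csSup_le ⟨0, ∅, by simp, fun u hu => absurd hu (Finset.notMem_empty u), by simp⟩ hub) (le_csSup ⟨n, hub⟩ hmem)
end Aux3

/-- Under conditions (i) and (ii) of the main theorem, the
scheme (2) is efficient for the independent set game on `G`: for every nonempty
coalition `S ⊆ E`, `∑_{i ∈ S} x_{S,i} = γ(S) = α(G[V⟨S⟩])`. -/
theorem stmt_17 (G : SimpleGraph V) [DecidableRel G.Adj]
    (hiso : ∀ w : V, G.degree w ≠ 0)
    (h1 : ∀ w : V, NearPendant G w)
    (h2 : ∀ e f : Sym2 V, TypeI G e → TypeI G f → e ≠ f →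
      ¬ ∃ w : V, w ∈ e ∧ w ∈ f) :
    ∀ x : Finset (Sym2 V) → Sym2 V → ℝ, SchemeSpec G x →
      ∀ S : Finset (Sym2 V), S ⊆ G.edgeFinset → S.Nonempty →
        ∑ i ∈ S, x S i = (gammaIS G S : ℝ) := by
  intro x hx S hS hSne
  rw [key1 hiso hx hS, key2 hiso h2 hS hSne]
  push_cast
  ring
end Aux
end

section
/- Let G = (V,E) be a finite simple graph with no isolated vertices, let S ⊆ E, and let I_S be a maximum independent set of the induced subgraph G[V⟨S⟩] containing the largest possible number of pendant vertices of G among all maximum independent sets of G[V⟨S⟩]. Then every vertex of I_S that is not pendant in G is not adjacent in G to any pendant vertex of G; in particular, if every vertex of G has distance at most two to a pendant vertex, every non-pendant vertex of I_S has distance exactly two to a pendant vertex of G. -/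
open Finset

variable {V : Type*} [Fintype V] [DecidableEq V]

/-- Let `S ⊆ E` and let `I` be a maximum independent set of
`G[V⟨S⟩]` containing the largest possible number of pendant vertices of `G` among
all maximum independent sets of `G[V⟨S⟩]`.  Then every vertex of `I` that is not
pendant in `G` is not adjacent to any pendant vertex of `G`; in particular, if
every vertex of `G` has distance at most two to a pendant vertex, every
non-pendant vertex of `I` has distance exactly two to a pendant vertex of `G`. -/
theorem stmt_18 (G : SimpleGraph V) [DecidableRel G.Adj]
    (hiso : ∀ w : V, G.degree w ≠ 0)
    (S : Finset (Sym2 V)) (hS : S ⊆ G.edgeFinset)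
    (I : Finset V)
    (hIsub : ↑I ⊆ onlyInc G ↑S) (hIind : Indep G I)
    (hImax : ∀ J : Finset V, ↑J ⊆ onlyInc G ↑S → Indep G J → J.card ≤ I.card)
    (hpend : ∀ J : Finset V, ↑J ⊆ onlyInc G ↑S → Indep G J → J.card = I.card →
      (J.filter (fun w => G.degree w = 1)).card ≤
        (I.filter (fun w => G.degree w = 1)).card) :
    (∀ v ∈ I, G.degree v ≠ 1 → ∀ p : V, G.degree p = 1 → ¬ G.Adj v p) ∧
    ((∀ w : V, NearPendant G w) →
      ∀ v ∈ I, G.degree v ≠ 1 →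
        ∃ p : V, G.degree p = 1 ∧ G.dist v p = 2) := by

  have key : ∀ v ∈ I, G.degree v ≠ 1 → ∀ p : V, G.degree p = 1 → ¬ G.Adj v p := by
    intro v hv hdv p hdp hadj
    have hpI : p ∉ I := fun hpI => hIind v hv p hpI hadj
    have hnb : G.neighborFinset p = {v} := by
      refine (Finset.eq_of_subset_of_card_le ?_ ?_).symm
      · intro w hw
        simp only [Finset.mem_singleton] at hw
        subst hw
        simpa using hadj.symm
      · simp [← SimpleGraph.card_neighborFinset_eq_degree] at hdp
        simp [hdp]
    have honly : ∀ w : V, G.Adj p w → w = v := by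
      intro w hw
      have : w ∈ G.neighborFinset p := by simpa using hw
      simpa [hnb] using this
    set J : Finset V := insert p (I.erase v) with hJ
    have hJsub : ↑J ⊆ onlyInc G ↑S := by
      intro w hw
      simp only [hJ, Finset.coe_insert, Set.mem_insert_iff, Finset.coe_erase,
        Set.mem_diff] at hw
      have hm : s(v,p) ∈ (↑S : Set (Sym2 V)) :=
        hIsub hv ⟨(by simpa using hadj : s(v,p) ∈ G.edgeSet), by simp⟩
      rcases hw with rfl | ⟨hwI, _⟩
      · intro e he
        obtain ⟨hee, hwe⟩ := he
        induction e with
        | h a b =>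
          have hab : G.Adj a b := hee
          rcases Sym2.mem_iff.mp hwe with rfl | rfl
          · rw [honly b hab]
            simpa [Sym2.eq_swap] using hm
          · rw [honly a hab.symm]
            simpa [Sym2.eq_swap] using hm
      · exact hIsub hwI
    have hJind : Indep G J := by
      intro u hu w hw
      simp only [hJ, Finset.mem_insert, Finset.mem_erase] at hu hw
      rcases hu with rfl | ⟨hune, huI⟩ <;> rcases hw with rfl | ⟨hwne, hwI⟩
      · exact fun h => G.irrefl h
      · intro h; exact hwne (honly w h)
      · intro h; exact hune (honly u h.symm)
      · exact hIind u huI w hwI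
    have hpnotin : p ∉ I.erase v := fun h => hpI (Finset.mem_of_mem_erase h)
    have hJcard : J.card = I.card := by
      rw [hJ, Finset.card_insert_of_notMem hpnotin, Finset.card_erase_of_mem hv]
      have := Finset.card_pos.mpr ⟨v, hv⟩
      omega
    have hfe : (I.erase v).filter (fun w => G.degree w = 1) =
        I.filter (fun w => G.degree w = 1) := by
      ext w
      simp only [Finset.mem_filter, Finset.mem_erase]
      constructor
      · rintro ⟨⟨_, h⟩, h2⟩; exact ⟨h, h2⟩
      · rintro ⟨h, h2⟩
        exact ⟨⟨fun hwv => hdv (hwv ▸ h2), h⟩, h2⟩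
    have hJfilter : J.filter (fun w => G.degree w = 1) =
        insert p (I.filter (fun w => G.degree w = 1)) := by
      rw [hJ, Finset.filter_insert, if_pos hdp, hfe]
    have := hpend J hJsub hJind hJcard
    rw [hJfilter, Finset.card_insert_of_notMem
      (fun h => hpI (Finset.mem_of_mem_filter p h))] at this
    omega
  refine ⟨key, ?_⟩
  intro hnear v hv hdv
  obtain ⟨p, hdp, w, hw⟩ := hnear v
  refine ⟨p, hdp, ?_⟩
  have hr : G.Reachable v p := ⟨w⟩
  have h2 : G.dist v p ≤ 2 := le_trans (SimpleGraph.dist_le w) hw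
  have h0 : G.dist v p ≠ 0 := by
    rw [ne_eq, hr.dist_eq_zero_iff]
    rintro rfl; exact hdv hdp
  have h1 : G.dist v p ≠ 1 := by
    rw [ne_eq, SimpleGraph.dist_eq_one_iff_adj]
    exact key v hv hdv p hdp
  omega
end
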